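/- Let n ∈ {1,2,3}, a₁ = -1, a₃ = 1, a₂ ∈ ℝ, and let φ ∈ H¹(ℝⁿ)\{0} satisfy both K(φ) = 0 and P(φ) = 0, where K(φ) = ‖∇φ‖² + ‖φ‖³_{L³} - a₂‖φ‖⁴_{L⁴} - ‖φ‖⁵_{L⁵} and P(φ) = ‖∇φ‖² + (n/6)‖φ‖³_{L³} - (n a₂/4)‖φ‖⁴_{L⁴} - (3n/10)‖φ‖⁵_{L⁵}. Then d/dλ K(φ^λ)|_{λ=1} < 0, where φ^λ(x) = λ^{n/2}φ(λx). -/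

import Mathlib

/-! Each term of `K` is homogeneous under `φ ↦ φ^λ`: `‖∇φ^λ‖² = λ²‖∇φ‖²` and
`‖φ^λ‖ᵖ_{Lᵖ} = λ^{n(p-2)/2}‖φ‖ᵖ_{Lᵖ}`. Differentiating at `λ = 1` gives
`2‖∇φ‖² + (n/2)‖φ‖³_{L³} - n a₂‖φ‖⁴_{L⁴} - (3n/2)‖φ‖⁵_{L⁵}`, which is
`4P(φ) - 2‖∇φ‖² - (n/6)‖φ‖³_{L³} - (3n/10)‖φ‖⁵_{L⁵}`: the `L⁴` term cancels, and with
`P(φ) = 0` the right side is negative because `‖φ‖³_{L³} > 0`. -/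

open MeasureTheory

noncomputable def gradSq (n : ℕ) (v : EuclideanSpace ℝ (Fin n) → ℝ) : ℝ :=
  ∫ x, ‖fderiv ℝ v x‖^2

noncomputable def lpP (n : ℕ) (p : ℕ) (v : EuclideanSpace ℝ (Fin n) → ℝ) : ℝ :=
  ∫ x, |v x| ^ p

/-- Nehari functional `K`. -/
noncomputable def Kf (n : ℕ) (a₂ : ℝ) (v : EuclideanSpace ℝ (Fin n) → ℝ) : ℝ :=
  gradSq n v + lpP n 3 v - a₂ * lpP n 4 v - lpP n 5 v

noncomputable def Jf (n : ℕ) (v : EuclideanSpace ℝ (Fin n) → ℝ) : ℝ :=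
  (1/4) * gradSq n v + (1/12) * lpP n 3 v + (1/20) * lpP n 5 v

/-- Action functional `S`. -/
noncomputable def Sf (n : ℕ) (a₂ : ℝ) (v : EuclideanSpace ℝ (Fin n) → ℝ) : ℝ :=
  (1/2) * gradSq n v + (1/3) * lpP n 3 v - (a₂/4) * lpP n 4 v - (1/5) * lpP n 5 v

/-- Pohozhaev functional `P`. -/
noncomputable def Pf (n : ℕ) (a₂ : ℝ) (v : EuclideanSpace ℝ (Fin n) → ℝ) : ℝ :=
  gradSq n v + ((n : ℝ)/6) * lpP n 3 v - ((n : ℝ) * a₂/4) * lpP n 4 v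
    - (3 * (n : ℝ)/10) * lpP n 5 v

/-- Membership in `X = Ḣ¹ ∩ L³` together with the integrabilities needed to make
all the functionals well defined. -/
def Adm (n : ℕ) (v : EuclideanSpace ℝ (Fin n) → ℝ) : Prop :=
  Differentiable ℝ v ∧ MemLp (fun x => ‖fderiv ℝ v x‖) 2 volume ∧
    MemLp v 3 volume ∧ MemLp v 4 volume ∧ MemLp v 5 volume

/-- The rescaling `v^λ(x) = λ^{n/2} v (λ x)`. -/
noncomputable def scal (n : ℕ) (l : ℝ) (v : EuclideanSpace ℝ (Fin n) → ℝ) :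
    EuclideanSpace ℝ (Fin n) → ℝ :=
  fun x => l ^ ((n : ℝ)/2) * v (l • x)


section Scaling

variable {n : ℕ} {l : ℝ}

lemma integral_const_mul_comp_smul (hl : 0 < l) (c : ℝ) (f : EuclideanSpace ℝ (Fin n) → ℝ) :
    ∫ x, c * f (l • x) = c * l ^ (-(n : ℝ)) * ∫ x, f x := by
  rw [integral_const_mul, Measure.integral_comp_smul_of_nonneg volume f l (hR := hl.le),
    finrank_euclideanSpace_fin, smul_eq_mul, ← Real.rpow_natCast, ← Real.rpow_neg hl.le, mul_assoc]

lemma lpP_scal (p : ℕ) (v : EuclideanSpace ℝ (Fin n) → ℝ) (hl : 0 < l) :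
    lpP n p (scal n l v) = l ^ ((p : ℝ) * n / 2 - n) * lpP n p v := by
  have hpow : ∀ x, |scal n l v x| ^ p = l ^ ((p : ℝ) * n / 2) * |v (l • x)| ^ p := by
    intro x
    rw [scal, abs_mul, mul_pow, abs_of_pos (Real.rpow_pos_of_pos hl _),
      ← Real.rpow_mul_natCast hl.le]
    ring_nf
  simp only [lpP, hpow]
  rw [integral_const_mul_comp_smul hl _ fun y => |v y| ^ p, ← Real.rpow_add hl, sub_eq_add_neg]

lemma gradSq_scal (v : EuclideanSpace ℝ (Fin n) → ℝ) (hl : 0 < l) :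
    gradSq n (scal n l v) = l ^ (2 : ℝ) * gradSq n v := by
  have hnorm : ∀ x,
      ‖fderiv ℝ (scal n l v) x‖ ^ 2 = l ^ (2 + (n : ℝ)) * ‖fderiv ℝ v (l • x)‖ ^ 2 := by
    intro x
    have hscal : scal n l v = l ^ ((n : ℝ) / 2) • fun x => v (l • x) := rfl
    rw [hscal, fderiv_const_smul_field, Pi.smul_apply, fderiv_comp_smul, norm_smul, norm_smul,
      Real.norm_of_nonneg (Real.rpow_nonneg hl.le _), Real.norm_of_nonneg hl.le, mul_pow, mul_pow,
      ← Real.rpow_mul_natCast hl.le, Real.rpow_add hl, Real.rpow_two]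
    ring_nf
  simp only [gradSq, hnorm]
  rw [integral_const_mul_comp_smul hl _ fun y => ‖fderiv ℝ v y‖ ^ 2, ← Real.rpow_add hl,
    add_neg_cancel_right]

lemma Kf_scal (a₂ : ℝ) (v : EuclideanSpace ℝ (Fin n) → ℝ) (hl : 0 < l) :
    Kf n a₂ (scal n l v) = l ^ (2 : ℝ) * gradSq n v + l ^ ((n : ℝ) / 2) * lpP n 3 v
      - a₂ * l ^ (n : ℝ) * lpP n 4 v - l ^ (3 * (n : ℝ) / 2) * lpP n 5 v := by
  rw [Kf, gradSq_scal v hl, lpP_scal 3 v hl, lpP_scal 4 v hl, lpP_scal 5 v hl]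
  ring_nf

lemma hasDerivAt_Kf_scal_one (a₂ : ℝ) (v : EuclideanSpace ℝ (Fin n) → ℝ) :
    HasDerivAt (fun l => Kf n a₂ (scal n l v))
      (2 * gradSq n v + (n / 2) * lpP n 3 v - a₂ * n * lpP n 4 v
        - (3 * n / 2) * lpP n 5 v) 1 := by
  have hrpow (r : ℝ) : HasDerivAt (fun l : ℝ => l ^ r) r 1 := by
    simpa using Real.hasDerivAt_rpow_const (x := 1) (p := r) (Or.inl one_ne_zero)
  have hKf : (fun l => Kf n a₂ (scal n l v)) =ᶠ[nhds 1] fun l => l ^ (2 : ℝ) * gradSq n v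
      + l ^ ((n : ℝ) / 2) * lpP n 3 v - a₂ * l ^ (n : ℝ) * lpP n 4 v
      - l ^ (3 * (n : ℝ) / 2) * lpP n 5 v :=
    Filter.eventually_of_mem (Ioi_mem_nhds one_pos) fun l hl => Kf_scal a₂ v hl
  refine HasDerivAt.congr_of_eventuallyEq ?_ hKf
  exact ((((hrpow 2).mul_const _).fun_add ((hrpow _).mul_const _)).fun_sub
    (((hrpow _).const_mul a₂).mul_const _)).fun_sub ((hrpow _).mul_const _)

end Scaling

lemma lpP_pos {n p : ℕ} (hp : p ≠ 0) {v : EuclideanSpace ℝ (Fin n) → ℝ} (hv : Continuous v)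
    (hvp : MemLp v p volume) (hv0 : v ≠ 0) : 0 < lpP n p v := by
  have hint : Integrable (fun x => |v x| ^ p) volume := hvp.integrable_norm_pow hp
  rw [lpP, integral_pos_iff_support_of_nonneg (fun x => by positivity) hint]
  have hsupp : Function.support (fun x => |v x| ^ p) = Function.support v := by
    ext x
    simp [hp]
  rw [hsupp]
  exact hv.isOpen_support.measure_pos volume (Function.support_nonempty_iff.mpr hv0)

theorem stmt11_general (n : ℕ) (hn : n ∈ ({1, 2, 3} : Set ℕ)) (a₂ : ℝ)
    (φ : EuclideanSpace ℝ (Fin n) → ℝ)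
    (hφ : Adm n φ) (hφ0 : φ ≠ 0)
    (hP : Pf n a₂ φ = 0) :
    deriv (fun l : ℝ => Kf n a₂ (scal n l φ)) 1 < 0 := by
  obtain ⟨hdiff, -, hφ3, -, -⟩ := hφ
  have hn0 : (0 : ℝ) < n := by
    rcases hn with rfl | rfl | rfl <;> norm_num
  have hL3 : 0 < lpP n 3 φ := lpP_pos three_ne_zero hdiff.continuous hφ3 hφ0
  have hG : 0 ≤ gradSq n φ := integral_nonneg fun x => by positivity
  have hL5 : 0 ≤ lpP n 5 φ := integral_nonneg fun x => by positivity
  have hderiv : deriv (fun l : ℝ => Kf n a₂ (scal n l φ)) 1 = 4 * Pf n a₂ φ - 2 * gradSq n φ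
      - (n / 6) * lpP n 3 φ - (3 * n / 10) * lpP n 5 φ := by
    rw [(hasDerivAt_Kf_scal_one a₂ φ).deriv, Pf]
    ring
  rw [hderiv, hP]
  linarith [mul_pos hn0 hL3, mul_nonneg hn0.le hL5]

theorem stmt11 (n : ℕ) (hn : n ∈ ({1, 2, 3} : Set ℕ)) (a₂ : ℝ)
    (φ : EuclideanSpace ℝ (Fin n) → ℝ)
    (hφ : Adm n φ) (hL2 : MemLp φ 2 volume) (hφ0 : φ ≠ 0)
    (hK : Kf n a₂ φ = 0) (hP : Pf n a₂ φ = 0) :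
    deriv (fun l : ℝ => Kf n a₂ (scal n l φ)) 1 < 0 :=
  stmt11_general n hn a₂ φ hφ hφ0 hP
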